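/- arXiv:math/0610134 — 4 statements merged into one kernel-verified Lean document; each statement's English description precedes it below -/
import Mathlib

section
/- In the commutative ring A = ℤ[h₀,h₁]/(h₀⁴, h₁³ + h₁²h₀ + h₁h₀² + h₀³), the product 3h₀ · (2h₀ + h₁) · (h₀ + 2h₁) · 3h₁ equals 27·h₀²h₁². -/
open MvPolynomial

noncomputable def h0 : MvPolynomial (Fin 2) ℤ := X 0
noncomputable def h1 : MvPolynomial (Fin 2) ℤ := X 1

noncomputable def I3 : Ideal (MvPolynomial (Fin 2) ℤ) :=
  Ideal.span {h0 ^ 4, h1 ^ 3 + h1 ^ 2 * h0 + h1 * h0 ^ 2 + h0 ^ 3}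

/-- In ℤ[h₀,h₁]/(h₀⁴, h₁³+h₁²h₀+h₁h₀²+h₀³), one has
    3h₀ · (2h₀+h₁) · (h₀+2h₁) · 3h₁ = 27 h₀²h₁². -/
theorem cubic_surface_27_lines :
    Ideal.Quotient.mk I3 ((3 * h0) * (2 * h0 + h1) * (h0 + 2 * h1) * (3 * h1)) =
    Ideal.Quotient.mk I3 (27 * h0 ^ 2 * h1 ^ 2) := by
  rw [Ideal.Quotient.eq, I3, Ideal.mem_span_pair]
  exact ⟨-18, 18 * h0, by ring⟩
end

section
/- In the commutative ring A = ℤ[h₀,h₁]/(h₀⁵, h₁⁴ + h₁³h₀ + h₁²h₀² + h₁h₀³ + h₀⁴), the product ∏_{i=0}^{5} ((5−i)h₀ + i·h₁) equals 2875·h₀³h₁³. -/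
open MvPolynomial Finset

noncomputable def I4 : Ideal (MvPolynomial (Fin 2) ℤ) :=
  Ideal.span {h0 ^ 5, h1 ^ 4 + h1 ^ 3 * h0 + h1 ^ 2 * h0 ^ 2 + h1 * h0 ^ 3 + h0 ^ 4}

/-- In ℤ[h₀,h₁]/(h₀⁵, h₁⁴+h₁³h₀+h₁²h₀²+h₁h₀³+h₀⁴), one has
    ∏_{i=0}^{5} ((5−i)h₀ + i·h1) = 2875 h₀³h₁³. -/
theorem quintic_2875_lines :
    Ideal.Quotient.mk I4 (∏ i ∈ Finset.range 6,
        (((5 - i : ℕ) : MvPolynomial (Fin 2) ℤ) * h0 + (i : MvPolynomial (Fin 2) ℤ) * h1)) =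
    Ideal.Quotient.mk I4 (2875 * h0 ^ 3 * h1 ^ 3) := by
  rw [Ideal.Quotient.eq]
  have key : (∏ i ∈ Finset.range 6,
        (((5 - i : ℕ) : MvPolynomial (Fin 2) ℤ) * h0 + (i : MvPolynomial (Fin 2) ℤ) * h1))
      - 2875 * h0 ^ 3 * h1 ^ 3
      = (-3250 * h1 - 3250 * h0) * (h0 ^ 5)
        + (600 * h0 * h1 + 3250 * h0 ^ 2) *
          (h1 ^ 4 + h1 ^ 3 * h0 + h1 ^ 2 * h0 ^ 2 + h1 * h0 ^ 3 + h0 ^ 4) := by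
    simp [Finset.prod_range_succ]
    ring
  rw [key]
  exact Ideal.add_mem _
    (Ideal.mul_mem_left _ _ (Ideal.subset_span (by simp)))
    (Ideal.mul_mem_left _ _ (Ideal.subset_span (by simp)))
end

section
/- In the commutative ring A = ℤ[h₀,h₁]/(h₀⁹, h₁⁸ + h₁⁷h₀ + h₁⁶h₀² + h₁⁵h₀³ + h₁⁴h₀⁴ + h₁³h₀⁵ + h₁²h₀⁶ + h₁h₀⁷ + h₀⁸), one has h₀⁶ · ∏_{i=0}^{3}(i·h₀ + (3−i)h₁) · ∏_{i=0}^{4}(i·h₀ + (4−i)h₁) = 12 · 144 · h₀⁸h₁⁷. -/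
open MvPolynomial Finset

noncomputable def I8 : Ideal (MvPolynomial (Fin 2) ℤ) :=
  Ideal.span {h0 ^ 9, ∑ i ∈ Finset.range 9, h0 ^ i * h1 ^ (8 - i)}

/-- In ℤ[h₀,h₁]/(h₀⁹, Σ_{i=0}^{8} h₀^i h₁^{8−i}), one has
    h₀⁶ · ∏_{i=0}^{3}(i h₀+(3−i)h₁) · ∏_{i=0}^{4}(i h₀+(4−i)h₁) = 12·144·h₀⁸h₁⁷. -/
theorem lines_through_point_34_in_P8 :
    Ideal.Quotient.mk I8 (h0 ^ 6 *
      (∏ i ∈ Finset.range 4,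
        ((i : MvPolynomial (Fin 2) ℤ) * h0 + ((3 - i : ℕ) : MvPolynomial (Fin 2) ℤ) * h1)) *
      (∏ i ∈ Finset.range 5,
        ((i : MvPolynomial (Fin 2) ℤ) * h0 + ((4 - i : ℕ) : MvPolynomial (Fin 2) ℤ) * h1))) =
    Ideal.Quotient.mk I8 (12 * 144 * h0 ^ 8 * h1 ^ 7) := by
  rw [Ideal.Quotient.eq, I8, Ideal.mem_span_pair]
  refine ⟨11808 * h1 ^ 6 + 27936 * h0 * h1 ^ 5 + 27936 * h0 ^ 2 * h1 ^ 4 +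
    11808 * h0 ^ 3 * h1 ^ 3 + 1728 * h0 ^ 4 * h1 ^ 2, 0, ?_⟩
  simp only [Finset.prod_range_succ, Finset.prod_range_zero]
  push_cast
  ring
end

section
/- Let n ≥ 2 and let P ∈ ℤ[h₀,h₁] be a homogeneous polynomial of degree 2n−2 that is symmetric under swapping h₀ and h₁. Write P = Σ c_{a} h₀^a h₁^{2n−2−a}. Then in the ring A = ℤ[h₀,h₁]/(h₀^{n+1}, Σ_{i=0}^{n} h₀^i h₁^{n−i}), the image of P equals (c_{n−1} − c_n)·h₀^{n−1}h₁^{n−1}. -/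
open MvPolynomial Finset

noncomputable def In (n : ℕ) : Ideal (MvPolynomial (Fin 2) ℤ) :=
  Ideal.span {h0 ^ (n + 1), ∑ i ∈ Finset.range (n + 1), h0 ^ i * h1 ^ (n - i)}

/-!
Write x, y for the images of h₀, h₁. Since (x − y) · Σᵢ xⁱ yⁿ⁻ⁱ = xⁿ⁺¹ − yⁿ⁺¹, the relations
force yⁿ⁺¹ = 0 along with xⁿ⁺¹ = 0, so among the monomials x^a y^(2n−2−a) only those with
a = n − 2, n − 1, n survive. Multiplying the second relation by xⁿ⁻² gives
xⁿ⁻² yⁿ + xⁿ⁻¹ yⁿ⁻¹ + xⁿ yⁿ⁻² = 0, and the symmetry c_{n−2} = c_n turns the three surviving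
terms into (c_{n−1} − c_n) (xy)ⁿ⁻¹.
-/

namespace MvPolynomial

variable {R : Type*} [CommSemiring R] {P : MvPolynomial (Fin 2) R}

theorem coeff_single_add_single_comm_of_rename_swap (h : rename (Equiv.swap 0 1) P = P)
    (a b : ℕ) :
    coeff (Finsupp.single 0 a + Finsupp.single 1 b) P =
      coeff (Finsupp.single 0 b + Finsupp.single 1 a) P := by
  have hswap : Finsupp.mapDomain (Equiv.swap (0 : Fin 2) 1)
      (Finsupp.single 0 a + Finsupp.single 1 b) = Finsupp.single 0 b + Finsupp.single 1 a := by
    rw [Finsupp.mapDomain_add, Finsupp.mapDomain_single, Finsupp.mapDomain_single,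
      Equiv.swap_apply_left, Equiv.swap_apply_right, add_comm]
  rw [← coeff_rename_mapDomain _ (Equiv.injective _) P, h, hswap]

theorem IsHomogeneous.eq_sum_range_C_mul_X_pow_mul_X_pow {d : ℕ} (h : P.IsHomogeneous d) :
    P = ∑ a ∈ range (d + 1),
      C (coeff (Finsupp.single 0 a + Finsupp.single 1 (d - a)) P) * X 0 ^ a * X 1 ^ (d - a) := by
  set f : ℕ → Fin 2 →₀ ℕ := fun a => Finsupp.single 0 a + Finsupp.single 1 (d - a)
  have hsupp : P.support ⊆ (range (d + 1)).image f := fun v hv => by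
    have hdeg : v 0 + v 1 = d := by
      by_contra hne
      refine mem_support_iff.mp hv (h.coeff_eq_zero ?_)
      rwa [Finsupp.degree_eq_sum, Fin.sum_univ_two]
    refine mem_image.mpr ⟨v 0, mem_range.mpr (by omega), ?_⟩
    ext i
    fin_cases i <;> simp [f, ← hdeg]
  have hinj : Set.InjOn f (range (d + 1)) := fun a _ b _ hab => by
    simpa [f] using congrArg (fun v => v 0) hab
  conv_lhs => rw [P.as_sum]
  rw [sum_subset hsupp fun v _ hv => by rw [notMem_support_iff.mp hv, monomial_zero],
    sum_image hinj]
  refine sum_congr rfl fun a _ => ?_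
  rw [X_pow_eq_monomial, X_pow_eq_monomial, mul_assoc, monomial_mul, one_mul, C_mul_monomial,
    mul_one]

end MvPolynomial

section

variable {R : Type*} [CommRing R] {x y : R} {m : ℕ}

theorem pow_eq_zero_of_geom_sum₂_eq_zero {k : ℕ} (hx : x ^ k = 0)
    (hs : ∑ i ∈ range k, x ^ i * y ^ (k - 1 - i) = 0) : y ^ k = 0 := by
  simpa [hs, hx] using (geom_sum₂_mul x y k).symm

theorem geom_sum₂_mul_pow_of_pow_eq_zero (hx : x ^ (m + 3) = 0) :
    (∑ i ∈ range (m + 3), x ^ i * y ^ (m + 2 - i)) * x ^ m =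
      x ^ m * y ^ (m + 2) + x ^ (m + 1) * y ^ (m + 1) + x ^ (m + 2) * y ^ m := by
  have hvanish : ∀ i, x ^ (3 + i) * y ^ (m + 2 - (3 + i)) * x ^ m = 0 := fun i => by
    rw [mul_right_comm, ← pow_add, pow_eq_zero_of_le (by omega) hx, zero_mul]
  rw [add_comm m 3, sum_range_add, add_mul, sum_mul (range m), sum_eq_zero fun i _ => hvanish i]
  simp only [sum_range_succ, sum_range_zero, zero_add, add_zero, pow_zero, pow_one, one_mul,
    tsub_zero, Nat.add_one_sub_one, add_tsub_cancel_right]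
  ring

theorem sum_range_mul_pow_mul_pow_eq_of_pow_eq_zero (hx : x ^ (m + 3) = 0)
    (hy : y ^ (m + 3) = 0) (c : ℕ → R) :
    ∑ a ∈ range (2 * m + 3), c a * x ^ a * y ^ (2 * m + 2 - a) =
      c m * x ^ m * y ^ (m + 2) + c (m + 1) * x ^ (m + 1) * y ^ (m + 1) +
        c (m + 2) * x ^ (m + 2) * y ^ m := by
  have hsub : Ico m (m + 3) ⊆ range (2 * m + 3) := fun a ha => by
    simp only [mem_Ico, mem_range] at ha ⊢; omega
  rw [← sum_subset hsub fun a ha hna => ?_, sum_Ico_eq_sum_range]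
  · simp only [Nat.add_sub_cancel_left, sum_range_succ, sum_range_zero, zero_add]
    rw [show 2 * m + 2 - (m + 0) = m + 2 by omega, show 2 * m + 2 - (m + 1) = m + 1 by omega,
      show 2 * m + 2 - (m + 2) = m by omega, add_zero]
  · simp only [mem_Ico, mem_range, not_and_or, not_le, not_lt] at ha hna
    rcases hna with hlt | hge
    · rw [pow_eq_zero_of_le (by omega) hy, mul_zero]
    · rw [pow_eq_zero_of_le hge hx, mul_zero, zero_mul]

theorem sum_range_mul_pow_mul_pow_eq_of_geom_sum₂_eq_zero (hx : x ^ (m + 3) = 0)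
    (hs : ∑ i ∈ range (m + 3), x ^ i * y ^ (m + 2 - i) = 0) (c : ℕ → R) (hc : c m = c (m + 2)) :
    ∑ a ∈ range (2 * m + 3), c a * x ^ a * y ^ (2 * m + 2 - a) =
      (c (m + 1) - c (m + 2)) * x ^ (m + 1) * y ^ (m + 1) := by
  have hy : y ^ (m + 3) = 0 := pow_eq_zero_of_geom_sum₂_eq_zero hx hs
  have hrel := geom_sum₂_mul_pow_of_pow_eq_zero (y := y) hx
  rw [hs, zero_mul] at hrel
  rw [sum_range_mul_pow_mul_pow_eq_of_pow_eq_zero hx hy, hc]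
  linear_combination -c (m + 2) * hrel

end

/-- Let n ≥ 2 and let P ∈ ℤ[h₀,h₁] be homogeneous of degree 2n−2 and symmetric under
    swapping h₀ and h₁, with coefficients c a = coeff of h₀^a h₁^{2n−2−a}. Then in
    A = ℤ[h₀,h₁]/(h₀^{n+1}, Σ_{i=0}^{n} h₀^i h₁^{n−i}), the image of P equals
    (c_{n−1} − c_n)·h₀^{n−1}h₁^{n−1}. -/
theorem symmetric_class_reduction (n : ℕ) (hn : 2 ≤ n) (P : MvPolynomial (Fin 2) ℤ)
    (hhom : P.IsHomogeneous (2 * n - 2))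
    (hsymm : MvPolynomial.rename (Equiv.swap (0 : Fin 2) 1) P = P)
    (c : ℕ → ℤ)
    (hc : ∀ a, c a = MvPolynomial.coeff
      (Finsupp.single (0 : Fin 2) a + Finsupp.single (1 : Fin 2) (2 * n - 2 - a)) P) :
    Ideal.Quotient.mk (In n) P =
      Ideal.Quotient.mk (In n) (C (c (n - 1) - c n) * h0 ^ (n - 1) * h1 ^ (n - 1)) := by
  obtain ⟨m, rfl⟩ : ∃ m, n = m + 2 := ⟨n - 2, by omega⟩
  rw [show 2 * (m + 2) - 2 = 2 * m + 2 by omega] at hhom hc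
  have hcsymm : c m = c (m + 2) := by
    rw [hc, hc, show 2 * m + 2 - m = m + 2 by omega, show 2 * m + 2 - (m + 2) = m by omega,
      coeff_single_add_single_comm_of_rename_swap hsymm]
  set φ := Ideal.Quotient.mk (In (m + 2))
  have hx : φ (X 0) ^ (m + 3) = 0 := by
    rw [← map_pow, Ideal.Quotient.eq_zero_iff_mem]
    exact Ideal.subset_span (by simp [h0])
  have hs : ∑ i ∈ range (m + 3), φ (X 0) ^ i * φ (X 1) ^ (m + 2 - i) = 0 := by
    simp only [← map_pow, ← map_mul, ← map_sum]
    rw [Ideal.Quotient.eq_zero_iff_mem]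
    exact Ideal.subset_span (by simp [h0, h1])
  conv_lhs => rw [hhom.eq_sum_range_C_mul_X_pow_mul_X_pow]
  simp only [← hc, map_sum, map_mul, map_pow]
  rw [sum_range_mul_pow_mul_pow_eq_of_geom_sum₂_eq_zero hx hs _ (by rw [hcsymm])]
  simp [h0, h1]
end
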